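/- Every canonical n×m binary matrix is semi-canonical. -/

import Mathlib

/-- The value of a row of length `m` read as a binary number (most significant digit first). -/
def rowVal (m : ℕ) (row : Fin m → Bool) : ℕ :=
  ∑ j : Fin m, (row j).toNat * 2 ^ (m - 1 - (j : ℕ))

/-- `r(A)`: the tuple of row values of a binary matrix. -/
def rtup {n m : ℕ} (A : Fin n → Fin m → Bool) : Fin n → ℕ :=
  fun i => rowVal m (A i)

/-- `c(A)`: the tuple of column values of a binary matrix. -/
def ctup {n m : ℕ} (A : Fin n → Fin m → Bool) : Fin m → ℕ :=
  fun j => rowVal n (fun i => A i j)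

/-- `A ∼ B`: `B` is obtained from `A` by permuting rows and columns. -/
def MatEquiv {n m : ℕ} (A B : Fin n → Fin m → Bool) : Prop :=
  ∃ (ρ : Equiv.Perm (Fin n)) (σ : Equiv.Perm (Fin m)), ∀ i j, B i j = A (ρ i) (σ j)

/-- `A` is semi-canonical: both `r(A)` and `c(A)` are weakly increasing. -/
def SemiCanonical {n m : ℕ} (A : Fin n → Fin m → Bool) : Prop :=
  Monotone (rtup A) ∧ Monotone (ctup A)

/-- `A` is canonical: `r(A)` is the lexicographic minimum over the equivalence class of `A`. -/
def Canonical {n m : ℕ} (A : Fin n → Fin m → Bool) : Prop :=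
  ∀ B, MatEquiv A B → toLex (rtup A) ≤ toLex (rtup B)

/-!
Reading a row as a binary number is strictly monotone for the lexicographic order on bit
vectors. If `r(A)` descended at rows `i < i'`, swapping these rows would make `r(A)`
lexicographically smaller. If `c(A)` descended at columns `j < j'`, the first row where the
two columns differ has a `1` in column `j` and a `0` in column `j'`; swapping the columns
leaves the earlier rows unchanged and decreases that row, again making `r(A)` smaller.
-/

lemma rowVal_succ {m : ℕ} (x : Fin (m + 1) → Bool) :
    rowVal (m + 1) x = (x 0).toNat * 2 ^ m + rowVal m (Fin.tail x) := by
  simp only [rowVal, Fin.sum_univ_succ, Fin.val_zero, Fin.val_succ, Fin.tail,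
    add_tsub_cancel_right, tsub_zero, Nat.sub_add_eq, Nat.sub_right_comm m 1]

lemma rowVal_lt_two_pow (m : ℕ) (x : Fin m → Bool) : rowVal m x < 2 ^ m := by
  induction m with
  | zero => simp [rowVal]
  | succ m ih =>
    rw [rowVal_succ, pow_succ]
    have := ih (Fin.tail x)
    have := Bool.toNat_le (x 0)
    nlinarith

lemma rowVal_strictMono (m : ℕ) :
    StrictMono (fun x : Lex (Fin m → Bool) => rowVal m (ofLex x)) := by
  induction m with
  | zero => rintro _ _ ⟨⟨_, ⟨⟩⟩, _⟩
  | succ m ih =>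
    rintro x y ⟨i, hpre, hi⟩
    simp only [rowVal_succ]
    induction i using Fin.cases with
    | zero =>
      obtain ⟨hx, hy⟩ := Bool.lt_iff.1 hi
      have := rowVal_lt_two_pow m (Fin.tail (ofLex x))
      simp only [Pi.ofLex_apply, hx, hy, Bool.toNat_false, Bool.toNat_true]
      omega
    | succ k =>
      have h0 : ofLex x 0 = ofLex y 0 := hpre 0 k.succ_pos
      have htail : toLex (Fin.tail (ofLex x)) < toLex (Fin.tail (ofLex y)) :=
        ⟨k, fun j hj => hpre j.succ (Fin.succ_lt_succ_iff.2 hj), hi⟩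
      rw [h0]
      exact Nat.add_lt_add_left (ih htail) _

lemma Canonical.monotone_rtup {n m : ℕ} {A : Fin n → Fin m → Bool} (hA : Canonical A) :
    Monotone (rtup A) := by
  intro i i' hle
  by_contra! hlt
  have hB : MatEquiv A (fun k => A (Equiv.swap i i' k)) := ⟨Equiv.swap i i', 1, fun _ _ => rfl⟩
  exact (hA _ hB).not_gt (Pi.lex_desc hle hlt)

lemma Canonical.monotone_ctup {n m : ℕ} {A : Fin n → Fin m → Bool} (hA : Canonical A) :
    Monotone (ctup A) := by
  intro j j' hle
  by_contra! hlt
  obtain ⟨i, hpre, hi⟩ : toLex (fun k => A k j') < toLex (fun k => A k j) :=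
    (rowVal_strictMono n).lt_iff_lt.1 hlt
  have hB : MatEquiv A (fun k => A k ∘ Equiv.swap j j') :=
    ⟨1, Equiv.swap j j', fun _ _ => rfl⟩
  refine (hA _ hB).not_gt ⟨i, fun k hk => ?_, ?_⟩
  · exact congrArg (rowVal m) (funext (Equiv.apply_swap_eq_self (hpre k hk).symm))
  · exact rowVal_strictMono m (Pi.lex_desc hle hi)

theorem canonical_is_semiCanonical {n m : ℕ} (A : Fin n → Fin m → Bool)
    (hA : Canonical A) : SemiCanonical A :=
  ⟨hA.monotone_rtup, hA.monotone_ctup⟩
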